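/- arXiv:2003.03851 — 3 statements merged into one kernel-verified Lean document; each statement's English description precedes it below -/
import Mathlib

section
/- Let d₁(τ,x) = (x + (r + σ²/2)τ)/(σ√τ) with σ > 0, r ≥ 0, τ > 0, and N the standard normal CDF. For p ≥ 1 and K > 0, the function v(τ,x) = K e^{rτ + x}(N(d₁(τ,x)) − 1) satisfies ∫_ℝ |v(τ,x)|^p dx ≤ (1/p) K^p e^{p(p−1)τσ²/2}. In particular ‖v(τ,·)‖_{L^p} ≤ p^{-1/p} K e^{(p−1)Tσ²/2} for all 0 < τ ≤ T. -/
open MeasureTheory Real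

/-- Standard normal cumulative distribution function. -/
noncomputable def stdNormalCDF (d : ℝ) : ℝ :=
  ∫ ξ in Set.Iio d, Real.exp (-ξ ^ 2 / 2) / Real.sqrt (2 * Real.pi)

/-- Black–Scholes argument `d₁(τ,x) = (x + (r + σ²/2)τ)/(σ√τ)`. -/
noncomputable def dOne (σ r τ x : ℝ) : ℝ :=
  (x + (r + σ ^ 2 / 2) * τ) / (σ * Real.sqrt τ)

open Set ProbabilityTheory

/-! If `Y` has law `N(-c, s²)`, then `1 - N((x + c) / s) = P(Y ≥ x)`, so by Tonelli
`∫ e^{bx} (1 - N((x + c) / s)) dx = E[∫_{x ≤ Y} e^{bx} dx] = E[e^{bY}] / b`, which is the Gaussian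
moment generating function divided by `b`. Since `0 ≤ 1 - N ≤ 1`, `(1 - N)^p ≤ 1 - N` for `p ≥ 1`,
so `|v|^p` is dominated by `K^p e^{prτ}` times such an integrand with `b = p`,
`c = (r + σ²/2) τ` and `s = σ √τ`; the exponents then combine to `p (p - 1) τ σ² / 2`. -/

section ExpMoment

variable {μ : Measure ℝ} {b : ℝ}

lemma lintegral_exp_mul_measure_Ici [SFinite μ] (hb : 0 < b) :
    ∫⁻ x, ENNReal.ofReal (exp (b * x)) * μ (Ici x) =
      ∫⁻ y, ENNReal.ofReal (exp (b * y) / b) ∂μ := by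
  let f : ℝ → ℝ → ENNReal := fun x y =>
    {p : ℝ × ℝ | p.1 ≤ p.2}.indicator (fun p => ENNReal.ofReal (exp (b * p.1))) (x, y)
  have hf : Measurable (Function.uncurry f) := (Measurable.ennreal_ofReal (by fun_prop)).indicator
    (measurableSet_le measurable_fst measurable_snd)
  calc ∫⁻ x, ENNReal.ofReal (exp (b * x)) * μ (Ici x)
      = ∫⁻ x, ∫⁻ y, f x y ∂μ := by
        refine lintegral_congr fun x => ?_
        rw [← lintegral_indicator_one measurableSet_Ici,
          ← lintegral_const_mul _ (measurable_one.indicator measurableSet_Ici)]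
        refine lintegral_congr fun y => ?_
        by_cases hxy : x ≤ y <;> simp [f, hxy]
    _ = ∫⁻ y, (∫⁻ x, f x y) ∂μ := lintegral_lintegral_swap hf.aemeasurable
    _ = ∫⁻ y, ENNReal.ofReal (exp (b * y) / b) ∂μ := by
        refine lintegral_congr fun y => ?_
        rw [← integral_exp_mul_Iic hb, ofReal_integral_eq_lintegral_ofReal
          (integrableOn_exp_mul_Iic hb y) (ae_of_all _ fun x => (exp_pos _).le),
          ← lintegral_indicator measurableSet_Iic]
        refine lintegral_congr fun x => ?_
        by_cases hxy : x ≤ y <;> simp [f, hxy]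

lemma exp_mul_measureReal_Ici_eq_toReal (x : ℝ) :
    exp (b * x) * μ.real (Ici x) = (ENNReal.ofReal (exp (b * x)) * μ (Ici x)).toReal := by
  rw [ENNReal.toReal_mul, ENNReal.toReal_ofReal (exp_pos _).le, measureReal_def]

lemma measurable_ofReal_exp_mul_measure_Ici :
    Measurable fun x => ENNReal.ofReal (exp (b * x)) * μ (Ici x) :=
  (Measurable.ennreal_ofReal (by fun_prop)).mul
    (Antitone.measurable fun _ _ hxy => measure_mono (Ici_subset_Ici.mpr hxy))

lemma lintegral_exp_mul_measure_Ici_eq_ofReal [SFinite μ] (hb : 0 < b)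
    (hμ : Integrable (fun y => exp (b * y)) μ) :
    ∫⁻ x, ENNReal.ofReal (exp (b * x)) * μ (Ici x) =
      ENNReal.ofReal ((∫ y, exp (b * y) ∂μ) / b) := by
  rw [lintegral_exp_mul_measure_Ici hb, ← integral_div, ofReal_integral_eq_lintegral_ofReal
    (hμ.div_const b) (ae_of_all _ fun y => by positivity)]

variable [IsFiniteMeasure μ]

lemma integrable_exp_mul_measureReal_Ici (hb : 0 < b)
    (hμ : Integrable (fun y => exp (b * y)) μ) :
    Integrable fun x => exp (b * x) * μ.real (Ici x) := by
  simp_rw [exp_mul_measureReal_Ici_eq_toReal]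
  exact integrable_toReal_of_lintegral_ne_top
    measurable_ofReal_exp_mul_measure_Ici.aemeasurable
    (lintegral_exp_mul_measure_Ici_eq_ofReal hb hμ ▸ ENNReal.ofReal_ne_top)

lemma integral_exp_mul_measureReal_Ici (hb : 0 < b)
    (hμ : Integrable (fun y => exp (b * y)) μ) :
    ∫ x, exp (b * x) * μ.real (Ici x) = (∫ y, exp (b * y) ∂μ) / b := by
  simp_rw [exp_mul_measureReal_Ici_eq_toReal]
  rw [integral_toReal measurable_ofReal_exp_mul_measure_Ici.aemeasurable
    (ae_of_all _ fun x => ENNReal.mul_lt_top ENNReal.ofReal_lt_top (measure_lt_top μ _)),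
    lintegral_exp_mul_measure_Ici_eq_ofReal hb hμ, ENNReal.toReal_ofReal]
  exact div_nonneg (integral_nonneg fun y => (exp_pos _).le) hb.le

end ExpMoment

lemma stdNormalCDF_eq_measureReal (d : ℝ) :
    stdNormalCDF d = (gaussianReal 0 1).real (Iio d) := by
  rw [measureReal_def, gaussianReal_apply_eq_integral _ one_ne_zero,
    ENNReal.toReal_ofReal
      (setIntegral_nonneg measurableSet_Iio fun _ _ => gaussianPDFReal_nonneg _ _ _),
    stdNormalCDF]
  congr with ξ
  simp [gaussianPDFReal, div_eq_inv_mul]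

lemma stdNormalCDF_nonneg (d : ℝ) : 0 ≤ stdNormalCDF d :=
  stdNormalCDF_eq_measureReal d ▸ measureReal_nonneg

lemma stdNormalCDF_le_one (d : ℝ) : stdNormalCDF d ≤ 1 :=
  stdNormalCDF_eq_measureReal d ▸ measureReal_le_one

lemma gaussianReal_map_affine (s c : ℝ) :
    (gaussianReal 0 1).map (fun z => s * z - c) =
      gaussianReal (-c) (.mk (s ^ 2) (sq_nonneg s)) := by
  rw [show (fun z => s * z - c) = (· - c) ∘ (s * ·) from rfl,
    ← Measure.map_map (by fun_prop) (by fun_prop), gaussianReal_map_const_mul,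
    gaussianReal_map_sub_const, mul_zero, zero_sub, mul_one]

lemma one_sub_stdNormalCDF_div_eq_measureReal (c : ℝ) {s : ℝ} (hs : 0 < s) (x : ℝ) :
    1 - stdNormalCDF ((x + c) / s) =
      (gaussianReal (-c) (.mk (s ^ 2) (sq_nonneg s))).real (Ici x) := by
  have hpre : (fun z => s * z - c) ⁻¹' Ici x = Ici ((x + c) / s) := by
    ext z
    simp only [mem_preimage, mem_Ici, div_le_iff₀ hs]
    constructor <;> intro h <;> linarith
  rw [← gaussianReal_map_affine, map_measureReal_apply (by fun_prop) measurableSet_Ici, hpre,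
    ← compl_Iio, measureReal_compl measurableSet_Iio, probReal_univ, stdNormalCDF_eq_measureReal]

section GaussianTail

variable (c : ℝ) {s b : ℝ}

lemma integrable_exp_mul_one_sub_stdNormalCDF (hs : 0 < s) (hb : 0 < b) :
    Integrable fun x => exp (b * x) * (1 - stdNormalCDF ((x + c) / s)) := by
  simp_rw [one_sub_stdNormalCDF_div_eq_measureReal c hs]
  exact integrable_exp_mul_measureReal_Ici hb (integrable_exp_mul_gaussianReal b)

lemma integral_exp_mul_one_sub_stdNormalCDF (hs : 0 < s) (hb : 0 < b) :
    ∫ x, exp (b * x) * (1 - stdNormalCDF ((x + c) / s)) =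
      exp (b ^ 2 * s ^ 2 / 2 - b * c) / b := by
  simp_rw [one_sub_stdNormalCDF_div_eq_measureReal c hs]
  rw [integral_exp_mul_measureReal_Ici hb (integrable_exp_mul_gaussianReal b)]
  change mgf id _ b / b = _
  simp only [mgf_id_gaussianReal, NNReal.coe_mk]
  congr 2
  ring

end GaussianTail

lemma abs_mul_exp_mul_stdNormalCDF_sub_one_rpow_le {K p : ℝ} (hK : 0 ≤ K) (hp : 1 ≤ p)
    (y d : ℝ) :
    |K * exp y * (stdNormalCDF d - 1)| ^ p ≤ K ^ p * (exp (p * y) * (1 - stdNormalCDF d)) := by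
  have hN₀ : 0 ≤ 1 - stdNormalCDF d := sub_nonneg.mpr (stdNormalCDF_le_one d)
  have hN₁ : 1 - stdNormalCDF d ≤ 1 := sub_le_self 1 (stdNormalCDF_nonneg d)
  rw [← neg_sub, mul_neg, abs_neg, abs_of_nonneg (by positivity), mul_rpow (by positivity) hN₀,
    mul_rpow hK (exp_pos y).le, ← exp_mul, mul_comm y, mul_assoc]
  gcongr
  exact rpow_le_self_of_le_one hN₀ hN₁ hp

lemma one_div_mul_rpow_mul_exp_rpow_one_div {p : ℝ} (hp : 0 < p) {K : ℝ} (hK : 0 ≤ K) (A : ℝ) :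
    (1 / p * K ^ p * exp (p * A)) ^ (1 / p) = p ^ (-(1 / p)) * K * exp A := by
  rw [mul_rpow (by positivity) (exp_pos _).le, mul_rpow (by positivity) (by positivity),
    one_div, inv_rpow hp.le, ← rpow_neg hp.le, ← rpow_mul hK, ← exp_mul, mul_inv_cancel₀ hp.ne',
    rpow_one, mul_comm p, mul_inv_cancel_right₀ hp.ne']

theorem bs_call_derivative_Lp_bound_general
    (σ r K p T : ℝ) (hσ : 0 < σ) (hK : 0 < K)
    (hp : 1 ≤ p) :
    ∀ τ : ℝ, 0 < τ → τ ≤ T →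
      (∫ x : ℝ, |K * Real.exp (r * τ + x) * (stdNormalCDF (dOne σ r τ x) - 1)| ^ p) ≤
        (1 / p) * K ^ p * Real.exp (p * (p - 1) * τ * σ ^ 2 / 2) ∧
      (∫ x : ℝ, |K * Real.exp (r * τ + x) * (stdNormalCDF (dOne σ r τ x) - 1)| ^ p) ^ (1 / p) ≤
        p ^ (-(1 / p)) * K * Real.exp ((p - 1) * T * σ ^ 2 / 2) := by
  intro τ hτ hτT
  have hp₀ : 0 < p := one_pos.trans_le hp
  have hs : 0 < σ * √τ := by positivity
  set I := ∫ x : ℝ, |K * Real.exp (r * τ + x) * (stdNormalCDF (dOne σ r τ x) - 1)| ^ p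
  have hmajorant : ∫ x, K ^ p * (exp (p * (r * τ)) *
      (exp (p * x) * (1 - stdNormalCDF ((x + (r + σ ^ 2 / 2) * τ) / (σ * √τ))))) =
      1 / p * K ^ p * exp (p * (p - 1) * τ * σ ^ 2 / 2) := by
    rw [integral_const_mul, integral_const_mul, integral_exp_mul_one_sub_stdNormalCDF _ hs hp₀,
      mul_div_assoc', ← exp_add, mul_pow, sq_sqrt hτ.le]
    field_simp
    ring_nf
  have hfirst : I ≤ 1 / p * K ^ p * exp (p * (p - 1) * τ * σ ^ 2 / 2) :=
    hmajorant ▸ integral_mono_of_nonneg (ae_of_all _ fun x => by positivity)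
      (((integrable_exp_mul_one_sub_stdNormalCDF _ hs hp₀).const_mul _).const_mul _)
      (ae_of_all _ fun x => (abs_mul_exp_mul_stdNormalCDF_sub_one_rpow_le hK.le hp _ _).trans_eq
        (by rw [mul_add, exp_add, mul_assoc (exp _)]; rfl))
  refine ⟨hfirst, ?_⟩
  calc I ^ (1 / p) ≤ (1 / p * K ^ p * exp (p * ((p - 1) * τ * σ ^ 2 / 2))) ^ (1 / p) := by
        gcongr
        exact hfirst.trans_eq (by ring_nf)
    _ = p ^ (-(1 / p)) * K * exp ((p - 1) * τ * σ ^ 2 / 2) :=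
        one_div_mul_rpow_mul_exp_rpow_one_div hp₀ hK.le _
    _ ≤ p ^ (-(1 / p)) * K * exp ((p - 1) * T * σ ^ 2 / 2) := by
        gcongr

/-- `v(τ,x) = K e^{rτ+x}(N(d₁(τ,x)) − 1)` satisfies
`∫ |v(τ,x)|^p dx ≤ (1/p) K^p e^{p(p−1)τσ²/2}`, and in particular
`‖v(τ,·)‖_{L^p} ≤ p^{-1/p} K e^{(p−1)Tσ²/2}` for `0 < τ ≤ T`. -/
theorem bs_call_derivative_Lp_bound
    (σ r K p T : ℝ) (hσ : 0 < σ) (hr : 0 ≤ r) (hK : 0 < K)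
    (hp : 1 ≤ p) (hT : 0 < T) :
    ∀ τ : ℝ, 0 < τ → τ ≤ T →
      (∫ x : ℝ, |K * Real.exp (r * τ + x) * (stdNormalCDF (dOne σ r τ x) - 1)| ^ p) ≤
        (1 / p) * K ^ p * Real.exp (p * (p - 1) * τ * σ ^ 2 / 2) ∧
      (∫ x : ℝ, |K * Real.exp (r * τ + x) * (stdNormalCDF (dOne σ r τ x) - 1)| ^ p) ^ (1 / p) ≤
        p ^ (-(1 / p)) * K * Real.exp ((p - 1) * T * σ ^ 2 / 2) :=
  bs_call_derivative_Lp_bound_general σ r K p T hσ hK hp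
end

section
/- Fix p ≥ 1 and T > 0. The function v(τ,x) = K e^{rτ + x}(N(d₁(τ,x)) − 1), where d₁(τ,x) = (x + (r+σ²/2)τ)/(σ√τ), σ > 0, r ≥ 0, K > 0, satisfies ‖∂_x v(τ,·)‖_{L^p} ≤ C₀ τ^{-1/2 + 1/(2p)} for all 0 < τ ≤ T, where C₀ depends only on p, σ, r, T, K. Consequently ‖v(τ,·)‖_{W^{1,p}} ≤ C₀' τ^{-1/2 + 1/(2p)}. -/
open MeasureTheory Real

/-- `v(τ,x) = K e^{rτ+x}(N(d₁(τ,x)) − 1)`. -/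
noncomputable def vBS (σ r K τ x : ℝ) : ℝ :=
  K * Real.exp (r * τ + x) * (stdNormalCDF (dOne σ r τ x) - 1)

/-!
Since `N' = φ`, `∂ₓ v = v + w` with `w = K e^{rτ+x} φ(d₁) / (σ√τ)`. Completing the square in
`d₁` turns `w(τ, ·)` into `K` times the rescaled Gaussian `φ((x + m) / s) / s`, `s = σ√τ`, whose
`L^p` norm is exactly `K s^{1/p - 1} ‖φ‖_p`, a constant times `τ^{-1/2 + 1/(2p)}`. For `τ ≤ T`,
`|v(τ, x)| ≤ K e^{rT + 2σ²T} e^{-|x|}` (for `x ≥ 0` by the tail bound `1 - N(d) ≤ e^{-d²/2}`), so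
`‖v(τ, ·)‖_p` is bounded uniformly, hence by a multiple of `τ^{-1/2 + 1/(2p)}`, whose exponent is
`≤ 0` when `p ≥ 1`. Minkowski's inequality adds the two bounds.
-/

open Set Filter ProbabilityTheory

section LpIntegral

variable {α : Type*} [MeasurableSpace α] {μ : Measure α} {p : ℝ} {f g : α → ℝ}

lemma integrable_rpow_abs_const_mul (a : ℝ) (hf : Integrable (fun x => |f x| ^ p) μ) :
    Integrable (fun x => |a * f x| ^ p) μ := by
  simp_rw [abs_mul, mul_rpow (abs_nonneg a) (abs_nonneg _)]
  exact hf.const_mul _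

lemma memLp_ofReal_of_integrable_rpow_abs (hp : 0 < p) (hf : AEStronglyMeasurable f μ)
    (hint : Integrable (fun x => |f x| ^ p) μ) : MemLp f (ENNReal.ofReal p) μ :=
  (integrable_norm_rpow_iff hf (by simpa using hp) ENNReal.ofReal_ne_top).mp
    (by simpa [ENNReal.toReal_ofReal hp.le] using hint)

lemma integral_rpow_abs_rpow_le_of_abs_le (hp : 0 < p) (hg : Integrable (fun x => |g x| ^ p) μ)
    (hfg : ∀ x, |f x| ≤ |g x|) :
    (∫ x, |f x| ^ p ∂μ) ^ (1 / p) ≤ (∫ x, |g x| ^ p ∂μ) ^ (1 / p) := by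
  refine rpow_le_rpow (integral_nonneg fun x => by positivity) ?_ (by positivity)
  exact integral_mono_of_nonneg (ae_of_all _ fun x => by positivity) hg
    (ae_of_all _ fun x => rpow_le_rpow (abs_nonneg _) (hfg x) hp.le)

lemma integral_rpow_abs_const_mul_rpow (a : ℝ) (f : α → ℝ) (hp : p ≠ 0) :
    (∫ x, |a * f x| ^ p ∂μ) ^ (1 / p) = |a| * (∫ x, |f x| ^ p ∂μ) ^ (1 / p) := by
  simp_rw [abs_mul, mul_rpow (abs_nonneg a) (abs_nonneg _), integral_const_mul]
  rw [mul_rpow (by positivity) (integral_nonneg fun x => by positivity),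
    ← rpow_mul (abs_nonneg a), mul_one_div_cancel hp, rpow_one]

lemma integral_rpow_abs_rpow_eq_toReal_eLpNorm (hp : 0 < p) (hf : MemLp f (ENNReal.ofReal p) μ) :
    (∫ x, |f x| ^ p ∂μ) ^ (1 / p) = (eLpNorm f (ENNReal.ofReal p) μ).toReal := by
  rw [hf.eLpNorm_eq_integral_rpow_norm (by simpa using hp) ENNReal.ofReal_ne_top,
    ENNReal.toReal_ofReal hp.le, ENNReal.toReal_ofReal (by positivity)]
  simp [one_div]

lemma integral_rpow_abs_add_rpow_le (hp : 1 ≤ p) (hf : MemLp f (ENNReal.ofReal p) μ)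
    (hg : MemLp g (ENNReal.ofReal p) μ) :
    (∫ x, |f x + g x| ^ p ∂μ) ^ (1 / p) ≤
      (∫ x, |f x| ^ p ∂μ) ^ (1 / p) + (∫ x, |g x| ^ p ∂μ) ^ (1 / p) := by
  have hp0 : 0 < p := by linarith
  have hfg := integral_rpow_abs_rpow_eq_toReal_eLpNorm hp0 (hf.add hg)
  simp only [Pi.add_apply] at hfg
  rw [hfg, integral_rpow_abs_rpow_eq_toReal_eLpNorm hp0 hf,
    integral_rpow_abs_rpow_eq_toReal_eLpNorm hp0 hg,
    ← ENNReal.toReal_add hf.eLpNorm_ne_top hg.eLpNorm_ne_top]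
  exact ENNReal.toReal_mono (ENNReal.add_ne_top.2 ⟨hf.eLpNorm_ne_top, hg.eLpNorm_ne_top⟩)
    (eLpNorm_add_le hf.aestronglyMeasurable hg.aestronglyMeasurable (by simpa using hp))

end LpIntegral

section RealLine

variable {p c : ℝ}

lemma abs_div_rpow_of_pos (a : ℝ) (hc : 0 < c) : |a / c| ^ p = c ^ (-p) * |a| ^ p := by
  rw [abs_div, abs_of_pos hc, div_rpow (abs_nonneg _) hc.le, rpow_neg hc.le]
  ring

lemma MeasureTheory.Integrable.rpow_abs_comp_add_div {f : ℝ → ℝ}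
    (hf : Integrable fun y => |f y| ^ p) (m : ℝ) (hc : 0 < c) :
    Integrable fun x => |f ((x + m) / c) / c| ^ p := by
  simp_rw [abs_div_rpow_of_pos _ hc]
  exact ((hf.comp_div hc.ne').comp_add_right m).const_mul _

lemma integral_rpow_abs_comp_add_div_rpow (f : ℝ → ℝ) (m : ℝ) (hc : 0 < c) (hp : p ≠ 0) :
    (∫ x, |f ((x + m) / c) / c| ^ p) ^ (1 / p) =
      c ^ (1 / p - 1) * (∫ y, |f y| ^ p) ^ (1 / p) := by
  have hI : ∫ x, |f ((x + m) / c)| ^ p = c * ∫ y, |f y| ^ p := by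
    rw [integral_add_right_eq_self (fun x => |f (x / c)| ^ p) m,
      Measure.integral_comp_div (fun y => |f y| ^ p), abs_of_pos hc, smul_eq_mul]
  simp_rw [abs_div_rpow_of_pos _ hc]
  have hcp : c ^ (-p) * c = (c ^ (1 / p - 1)) ^ p := by
    rw [← rpow_mul hc.le, show (1 / p - 1) * p = -p + 1 by field_simp; ring, rpow_add hc,
      rpow_one]
  rw [integral_const_mul, hI, ← mul_assoc, hcp,
    mul_rpow (by positivity) (integral_nonneg fun y => by positivity), one_div,
    rpow_rpow_inv (by positivity) hp]

lemma integrable_exp_neg_mul_abs (hc : 0 < c) : Integrable fun x : ℝ => exp (-c * |x|) := by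
  have hIoi : IntegrableOn (fun x : ℝ => exp (-c * |x|)) (Ioi 0) :=
    (exp_neg_integrableOn_Ioi 0 hc).congr_fun (fun x hx => by rw [abs_of_pos (mem_Ioi.1 hx)])
      measurableSet_Ioi
  have hIio : IntegrableOn (fun x : ℝ => exp (-c * |x|)) (Iio 0) := by
    have h := IntegrableOn.comp_neg_Iio (c := 0) (neg_zero (G := ℝ) ▸ hIoi)
    simp only [abs_neg] at h
    exact h
  rw [← integrableOn_univ, ← Iio_union_Ici (a := (0 : ℝ))]
  exact hIio.union ((integrableOn_Ici_iff_integrableOn_Ioi).mpr hIoi)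

lemma hasDerivAt_integral_Iic {f : ℝ → ℝ} (hf : Continuous f) (hfi : Integrable f) (d : ℝ) :
    HasDerivAt (fun d => ∫ ξ in Iic d, f ξ) (f d) d := by
  have h (e : ℝ) :
      ∫ ξ in Iic e, f ξ = (∫ ξ in Iic 0, f ξ) + ∫ ξ in (0 : ℝ)..e, f ξ := by
    rw [← intervalIntegral.integral_Iic_sub_Iic hfi.integrableOn hfi.integrableOn]
    ring
  have hFTC : HasDerivAt (fun e => ∫ ξ in (0 : ℝ)..e, f ξ) (f d) d :=
    intervalIntegral.integral_hasDerivAt_right hfi.intervalIntegrable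
      hf.aestronglyMeasurable.stronglyMeasurableAtFilter hf.continuousAt
  exact (hFTC.const_add _).congr_of_eventuallyEq (Eventually.of_forall h)

end RealLine

section StdNormal

lemma continuous_gaussianPDFReal (μ : ℝ) (v : NNReal) : Continuous (gaussianPDFReal μ v) := by
  rw [gaussianPDFReal_def]
  fun_prop

lemma stdNormalCDF_eq_integral_Iic (d : ℝ) :
    stdNormalCDF d = ∫ ξ in Iic d, gaussianPDFReal 0 1 ξ := by
  rw [stdNormalCDF, setIntegral_congr_set Iio_ae_eq_Iic]
  congr with ξ
  simp [gaussianPDFReal, div_eq_inv_mul]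

lemma stdNormalCDF_eq_cdf (d : ℝ) : stdNormalCDF d = cdf (gaussianReal 0 1) d := by
  rw [cdf_eq_real, measureReal_def, gaussianReal_apply_eq_integral 0 one_ne_zero,
    ENNReal.toReal_ofReal (setIntegral_nonneg measurableSet_Iic fun ξ _ =>
      gaussianPDFReal_nonneg 0 1 ξ),
    stdNormalCDF_eq_integral_Iic]

lemma hasDerivAt_stdNormalCDF (d : ℝ) : HasDerivAt stdNormalCDF (gaussianPDFReal 0 1 d) d := by
  rw [funext stdNormalCDF_eq_integral_Iic]
  exact hasDerivAt_integral_Iic (continuous_gaussianPDFReal 0 1) (integrable_gaussianPDFReal 0 1) d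

/-- Chernoff's bound with the Gaussian moment generating function `exp (t ^ 2 / 2)` at `t = d`. -/
lemma one_sub_stdNormalCDF_le {d : ℝ} (hd : 0 ≤ d) :
    1 - stdNormalCDF d ≤ exp (-d ^ 2 / 2) := by
  have htail : 1 - stdNormalCDF d ≤ (gaussianReal 0 1).real {ξ | d ≤ ξ} := by
    rw [stdNormalCDF_eq_cdf, cdf_eq_real, ← probReal_compl_eq_one_sub measurableSet_Iic,
      compl_Iic]
    exact measureReal_mono fun ξ (hξ : d < ξ) => hξ.le
  refine htail.trans <|
    (measure_ge_le_exp_mul_mgf d hd (integrable_exp_mul_gaussianReal d)).trans_eq ?_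
  rw [mgf_fun_id_gaussianReal, ← exp_add]
  congr 1
  push_cast
  ring

end StdNormal

section BlackScholes

variable {σ r K τ T p : ℝ}

noncomputable def wBS (σ r K τ x : ℝ) : ℝ :=
  K * exp (r * τ + x) * gaussianPDFReal 0 1 (dOne σ r τ x) / (σ * √τ)

lemma hasDerivAt_dOne (σ r τ x : ℝ) : HasDerivAt (dOne σ r τ) (1 / (σ * √τ)) x :=
  ((hasDerivAt_id' x).add_const ((r + σ ^ 2 / 2) * τ)).div_const (σ * √τ)

lemma hasDerivAt_vBS (σ r K τ x : ℝ) :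
    HasDerivAt (vBS σ r K τ) (vBS σ r K τ x + wBS σ r K τ x) x := by
  have hexp : HasDerivAt (fun y => K * exp (r * τ + y)) (K * exp (r * τ + x)) x := by
    simpa using (((hasDerivAt_id x).const_add (r * τ)).exp.const_mul K)
  have hN := ((hasDerivAt_stdNormalCDF (dOne σ r τ x)).comp x
    (hasDerivAt_dOne σ r τ x)).sub_const 1
  refine (hexp.mul hN).congr_deriv ?_
  simp only [vBS, wBS, Function.comp_apply]
  ring

lemma deriv_vBS (σ r K τ : ℝ) : deriv (vBS σ r K τ) = vBS σ r K τ + wBS σ r K τ :=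
  funext fun x => (hasDerivAt_vBS σ r K τ x).deriv

lemma continuous_vBS (σ r K τ : ℝ) : Continuous (vBS σ r K τ) :=
  continuous_iff_continuousAt.2 fun x => (hasDerivAt_vBS σ r K τ x).continuousAt

/-- Completing the square: `d₁² = ((x + (r - σ²/2)τ) / (σ√τ))² + 2(rτ + x)`. -/
lemma exp_mul_gaussianPDFReal_dOne (hσ : 0 < σ) (hτ : 0 < τ) (x : ℝ) :
    exp (r * τ + x) * gaussianPDFReal 0 1 (dOne σ r τ x) =
      gaussianPDFReal 0 1 ((x + (r - σ ^ 2 / 2) * τ) / (σ * √τ)) := by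
  have hs : σ * √τ ≠ 0 := by positivity
  have hsq : √τ ^ 2 = τ := sq_sqrt hτ.le
  simp only [gaussianPDFReal, dOne, NNReal.coe_one, mul_one, sub_zero]
  rw [mul_left_comm, ← exp_add]
  congr 2
  field_simp
  linear_combination (8 * σ ^ 2 * (r * τ + x)) * hsq

lemma wBS_eq (hσ : 0 < σ) (hτ : 0 < τ) :
    wBS σ r K τ = fun x =>
      K * (gaussianPDFReal 0 1 ((x + (r - σ ^ 2 / 2) * τ) / (σ * √τ)) / (σ * √τ)) := by
  ext x
  rw [wBS, mul_assoc K, exp_mul_gaussianPDFReal_dOne hσ hτ, mul_div_assoc]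

lemma integrable_rpow_abs_gaussianPDFReal (hp : 0 < p) :
    Integrable fun ξ => |gaussianPDFReal 0 1 ξ| ^ p := by
  have h (ξ : ℝ) :
      |gaussianPDFReal 0 1 ξ| ^ p = (√(2 * π))⁻¹ ^ p * exp (-(p / 2) * ξ ^ 2) := by
    simp only [gaussianPDFReal, NNReal.coe_one, mul_one, sub_zero]
    rw [abs_of_nonneg (by positivity), mul_rpow (by positivity) (by positivity), ← exp_mul]
    ring_nf
  simp_rw [h]
  exact (integrable_exp_neg_mul_sq (by positivity)).const_mul _

lemma memLp_wBS (hσ : 0 < σ) (hτ : 0 < τ) (hp : 0 < p) :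
    MemLp (wBS σ r K τ) (ENNReal.ofReal p) := by
  rw [wBS_eq hσ hτ]
  refine MemLp.const_mul (memLp_ofReal_of_integrable_rpow_abs hp ?_ ?_) K
  · exact ((continuous_gaussianPDFReal 0 1).comp (by fun_prop)).div_const _
      |>.aestronglyMeasurable
  · exact (integrable_rpow_abs_gaussianPDFReal hp).rpow_abs_comp_add_div _ (by positivity)

lemma integral_rpow_abs_wBS_rpow (hK : 0 ≤ K) (hσ : 0 < σ) (hτ : 0 < τ) (hp : p ≠ 0) :
    (∫ x, |wBS σ r K τ x| ^ p) ^ (1 / p) =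
      K * σ ^ (1 / p - 1) * (∫ ξ, |gaussianPDFReal 0 1 ξ| ^ p) ^ (1 / p) *
        τ ^ (-(1 / 2 : ℝ) + 1 / (2 * p)) := by
  rw [wBS_eq hσ hτ, integral_rpow_abs_const_mul_rpow _ _ hp,
    integral_rpow_abs_comp_add_div_rpow _ _ (by positivity) hp, abs_of_nonneg hK,
    mul_rpow hσ.le (sqrt_nonneg τ), sqrt_eq_rpow, ← rpow_mul hτ.le]
  ring_nf

lemma integrable_rpow_abs_exp_neg_abs (hp : 0 < p) : Integrable fun x : ℝ => |exp (-|x|)| ^ p :=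
  (integrable_exp_neg_mul_abs hp).congr <| ae_of_all _ fun x => by
    dsimp only
    rw [abs_of_pos (exp_pos _), ← exp_mul]
    ring_nf

lemma self_sub_dOne_sq_div_two_le (hσ : 0 < σ) (hr : 0 ≤ r) (hτ : 0 < τ) {x : ℝ}
    (hx : 0 ≤ x) :
    x - dOne σ r τ x ^ 2 / 2 ≤ 2 * σ ^ 2 * τ - x := by
  have hs : 0 < σ * √τ := by positivity
  have hsq : (σ * √τ) ^ 2 = σ ^ 2 * τ := by rw [mul_pow, sq_sqrt hτ.le]
  have hd : x / (σ * √τ) ≤ dOne σ r τ x :=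
    div_le_div_of_nonneg_right (by nlinarith [sq_nonneg σ]) hs.le
  have hd2 := pow_le_pow_left₀ (by positivity) hd 2
  have hxs : x / (σ * √τ) * (σ * √τ) = x := div_mul_cancel₀ x hs.ne'
  nlinarith [sq_nonneg (x / (σ * √τ) - 2 * (σ * √τ))]

lemma abs_vBS_le (hσ : 0 < σ) (hr : 0 ≤ r) (hK : 0 ≤ K) (hτ : 0 < τ) (hτT : τ ≤ T)
    (x : ℝ) :
    |vBS σ r K τ x| ≤ K * exp (r * T + 2 * σ ^ 2 * T) * exp (-|x|) := by
  have hN0 : 0 ≤ stdNormalCDF (dOne σ r τ x) := stdNormalCDF_eq_cdf _ ▸ cdf_nonneg _ _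
  have hN1 : stdNormalCDF (dOne σ r τ x) ≤ 1 := stdNormalCDF_eq_cdf _ ▸ cdf_le_one _ _
  have habs : |vBS σ r K τ x| = K * (exp (r * τ + x) * (1 - stdNormalCDF (dOne σ r τ x))) := by
    rw [vBS, abs_mul, abs_of_nonneg (a := K * exp (r * τ + x)) (by positivity),
      abs_of_nonpos (a := stdNormalCDF (dOne σ r τ x) - 1) (by linarith)]
    ring
  have hrτ : r * τ ≤ r * T := mul_le_mul_of_nonneg_left hτT hr
  have hστ : σ ^ 2 * τ ≤ σ ^ 2 * T := mul_le_mul_of_nonneg_left hτT (sq_nonneg σ)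
  rw [habs, mul_assoc, ← exp_add]
  refine mul_le_mul_of_nonneg_left ?_ hK
  rcases le_total x 0 with hx | hx
  · calc exp (r * τ + x) * (1 - stdNormalCDF (dOne σ r τ x)) ≤ exp (r * τ + x) * 1 := by
          gcongr
          linarith
      _ ≤ exp (r * T + 2 * σ ^ 2 * T + -|x|) := by
          rw [mul_one, abs_of_nonpos hx, neg_neg]
          exact exp_le_exp.2 (by nlinarith [sq_nonneg σ])
  · have hd : 0 ≤ dOne σ r τ x := div_nonneg (by positivity) (by positivity)
    calc exp (r * τ + x) * (1 - stdNormalCDF (dOne σ r τ x))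
        ≤ exp (r * τ + x) * exp (-dOne σ r τ x ^ 2 / 2) := by
          gcongr
          exact one_sub_stdNormalCDF_le hd
      _ ≤ exp (r * T + 2 * σ ^ 2 * T + -|x|) := by
          rw [← exp_add, abs_of_nonneg hx]
          exact exp_le_exp.2 (by linarith [self_sub_dOne_sq_div_two_le hσ hr hτ hx])

lemma memLp_vBS (hσ : 0 < σ) (hr : 0 ≤ r) (hK : 0 ≤ K) (hτ : 0 < τ) (hp : 0 < p) :
    MemLp (vBS σ r K τ) (ENNReal.ofReal p) := by
  have hg : MemLp (fun x : ℝ => K * exp (r * τ + 2 * σ ^ 2 * τ) * exp (-|x|))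
      (ENNReal.ofReal p) :=
    memLp_ofReal_of_integrable_rpow_abs hp (by fun_prop : Continuous _).aestronglyMeasurable
      (integrable_rpow_abs_const_mul _ (integrable_rpow_abs_exp_neg_abs hp))
  refine hg.of_le (continuous_vBS σ r K τ).aestronglyMeasurable (ae_of_all _ fun x => ?_)
  simpa [Real.norm_eq_abs, abs_of_nonneg, hK] using abs_vBS_le hσ hr hK hτ le_rfl x

lemma integral_rpow_abs_vBS_rpow_le (hσ : 0 < σ) (hr : 0 ≤ r) (hK : 0 ≤ K) (hτ : 0 < τ)
    (hτT : τ ≤ T) (hp : 0 < p) :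
    (∫ x, |vBS σ r K τ x| ^ p) ^ (1 / p) ≤
      K * exp (r * T + 2 * σ ^ 2 * T) * (∫ x, |exp (-|x|)| ^ p) ^ (1 / p) := by
  set B := K * exp (r * T + 2 * σ ^ 2 * T)
  have hB : 0 ≤ B := by positivity
  calc (∫ x, |vBS σ r K τ x| ^ p) ^ (1 / p) ≤ (∫ x, |B * exp (-|x|)| ^ p) ^ (1 / p) := by
        refine integral_rpow_abs_rpow_le_of_abs_le hp
          (integrable_rpow_abs_const_mul B (integrable_rpow_abs_exp_neg_abs hp)) fun x => ?_
        rw [abs_mul, abs_of_nonneg hB, abs_of_pos (exp_pos _)]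
        exact abs_vBS_le hσ hr hK hτ hτT x
    _ = B * (∫ x, |exp (-|x|)| ^ p) ^ (1 / p) := by
        rw [integral_rpow_abs_const_mul_rpow _ _ hp.ne', abs_of_nonneg hB]

lemma exists_integral_rpow_abs_vBS_rpow_le (hσ : 0 < σ) (hr : 0 ≤ r) (hK : 0 < K) (hp : 1 ≤ p)
    (hT : 0 < T) : ∃ D > 0, ∀ τ, 0 < τ → τ ≤ T →
      (∫ x, |vBS σ r K τ x| ^ p) ^ (1 / p) ≤ D * τ ^ (-(1 / 2 : ℝ) + 1 / (2 * p)) := by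
  have hp0 : 0 < p := by linarith
  set e : ℝ := -(1 / 2 : ℝ) + 1 / (2 * p)
  have he : e ≤ 0 := by
    rw [neg_add_nonpos_iff, div_le_div_iff₀ (by positivity) (by positivity)]
    linarith
  have hJ : 0 < ∫ x, |exp (-|x|)| ^ p := by
    simp_rw [abs_of_pos (exp_pos _), ← exp_mul]
    exact integral_exp_pos (by simpa [mul_comm] using integrable_exp_neg_mul_abs hp0)
  set M := K * exp (r * T + 2 * σ ^ 2 * T) * (∫ x, |exp (-|x|)| ^ p) ^ (1 / p)
  refine ⟨M * T ^ (-e), by positivity, fun τ hτ hτT => ?_⟩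
  calc (∫ x, |vBS σ r K τ x| ^ p) ^ (1 / p) ≤ M :=
        integral_rpow_abs_vBS_rpow_le hσ hr hK.le hτ hτT hp0
    _ = M * T ^ (-e) * T ^ e := by
        rw [mul_assoc, ← rpow_add hT, neg_add_cancel, rpow_zero, mul_one]
    _ ≤ M * T ^ (-e) * τ ^ e :=
        mul_le_mul_of_nonneg_left (rpow_le_rpow_of_nonpos hτ hτT he) (by positivity)

end BlackScholes

/-- `‖∂ₓ v(τ,·)‖_{L^p} ≤ C₀ τ^{-1/2+1/(2p)}` for `0 < τ ≤ T`, and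
consequently the `W^{1,p}` norm of `v(τ,·)` obeys the same power bound. -/
theorem bs_call_derivative_W1p_bound
    (σ r K p T : ℝ) (hσ : 0 < σ) (hr : 0 ≤ r) (hK : 0 < K)
    (hp : 1 ≤ p) (hT : 0 < T) :
    ∃ C₀ : ℝ, 0 < C₀ ∧ ∃ C₀' : ℝ, 0 < C₀' ∧ ∀ τ : ℝ, 0 < τ → τ ≤ T →
      (∫ x : ℝ, |deriv (fun y => vBS σ r K τ y) x| ^ p) ^ (1 / p) ≤
        C₀ * τ ^ (-(1 / 2 : ℝ) + 1 / (2 * p)) ∧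
      (∫ x : ℝ, |vBS σ r K τ x| ^ p) ^ (1 / p) +
        (∫ x : ℝ, |deriv (fun y => vBS σ r K τ y) x| ^ p) ^ (1 / p) ≤
        C₀' * τ ^ (-(1 / 2 : ℝ) + 1 / (2 * p)) := by
  have hp0 : 0 < p := by linarith
  obtain ⟨D, hD, hv⟩ := exists_integral_rpow_abs_vBS_rpow_le hσ hr hK hp hT
  set Cw := K * σ ^ (1 / p - 1) * (∫ ξ, |gaussianPDFReal 0 1 ξ| ^ p) ^ (1 / p)
  refine ⟨D + Cw, by positivity, 2 * D + Cw, by positivity, fun τ hτ hτT => ?_⟩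
  have hw := integral_rpow_abs_wBS_rpow (r := r) hK.le hσ hτ hp0.ne'
  have hderiv : (∫ x, |deriv (fun y => vBS σ r K τ y) x| ^ p) ^ (1 / p) ≤
      (∫ x, |vBS σ r K τ x| ^ p) ^ (1 / p) + (∫ x, |wBS σ r K τ x| ^ p) ^ (1 / p) := by
    rw [deriv_vBS]
    exact integral_rpow_abs_add_rpow_le hp (memLp_vBS hσ hr hK.le hτ hp0)
      (memLp_wBS hσ hτ hp0)
  have hvτ := hv τ hτ hτT
  constructor <;> linarith
end

section
/- Let V : [0,T] × (0,∞) → ℝ be C^{1,2}, decreasing in S, and suppose that on the region 0 < S ≤ S_f(t) ≤ K one has V(t,S) = K − S and V(t, S e^y) ≤ K − S for all y ≥ 0. If ν is a positive measure on ℝ with ∫₀^∞ (e^y − 1) ν(dy) ≤ r, then for (t,S) in this region, ∂_t V + (σ²/2) S² ∂²_S V + r S ∂_S V − r V + ∫_ℝ [V(t, S e^y) − V(t,S) − S(e^y − 1) ∂_S V(t,S)] ν(dy) ≤ 0. -/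
open MeasureTheory Real

/-- the supersolution inequality in the exercise region for an
American put under a Lévy model with structural condition
`∫₀^∞ (e^y − 1) ν(dy) ≤ r`. -/
theorem american_put_exercise_region_supersolution
    (σ r K T : ℝ) (hσ : 0 < σ) (hr : 0 ≤ r) (hK : 0 < K) (hT : 0 < T)
    (V Vt VS VSS : ℝ → ℝ → ℝ) (Sf : ℝ → ℝ)
    -- V is C^{1,2}: Vt, VS, VSS are its partial derivatives
    (hVt : ∀ t S, HasDerivAt (fun t' => V t' S) (Vt t S) t)
    (hVS : ∀ t S, HasDerivAt (fun s => V t s) (VS t S) S)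
    (hVSS : ∀ t S, HasDerivAt (fun s => VS t s) (VSS t S) S)
    (hVtcont : Continuous fun q : ℝ × ℝ => Vt q.1 q.2)
    (hVScont : Continuous fun q : ℝ × ℝ => VS q.1 q.2)
    (hVSScont : Continuous fun q : ℝ × ℝ => VSS q.1 q.2)
    -- V is decreasing in S
    (hdec : ∀ t S₁ S₂, 0 < S₁ → S₁ ≤ S₂ → V t S₂ ≤ V t S₁)
    (ν : Measure ℝ)
    (hνint : IntegrableOn (fun y => Real.exp y - 1) (Set.Ioi 0) ν)
    (hstruct : (∫ y in Set.Ioi (0 : ℝ), (Real.exp y - 1) ∂ν) ≤ r)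
    (t S : ℝ) (ht0 : 0 ≤ t) (htT : t ≤ T)
    (hS0 : 0 < S) (hSSf : S ≤ Sf t) (hSfK : Sf t ≤ K)
    -- on the exercise region V(t,S) = K − S and the partials are those of K − S
    (hval : ∀ s : ℝ, 0 < s → s ≤ Sf t → V t s = K - s)
    (hVt0 : Vt t S = 0) (hVSval : VS t S = -1) (hVSS0 : VSS t S = 0)
    (hup : ∀ y : ℝ, 0 ≤ y → V t (S * Real.exp y) ≤ K - S)
    (hnonlocint : Integrable (fun y =>
      V t (S * Real.exp y) - V t S - S * (Real.exp y - 1) * VS t S) ν) :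
    Vt t S + σ ^ 2 / 2 * S ^ 2 * VSS t S + r * S * VS t S - r * V t S +
      (∫ y, (V t (S * Real.exp y) - V t S - S * (Real.exp y - 1) * VS t S) ∂ν) ≤ 0 := by
  have hVtS : V t S = K - S := hval S hS0 hSSf
  set f : ℝ → ℝ := fun y => V t (S * Real.exp y) - V t S - S * (Real.exp y - 1) * VS t S with hf
  have hfind : f = Set.indicator (Set.Ioi (0:ℝ)) f := by
    ext y
    by_cases hy : y ∈ Set.Ioi (0:ℝ)
    · rw [Set.indicator_of_mem hy]
    · rw [Set.indicator_of_notMem hy]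
      simp only [Set.mem_Ioi, not_lt] at hy
      have he : Real.exp y ≤ 1 := Real.exp_le_one_iff.mpr hy
      have h1 : 0 < S * Real.exp y := mul_pos hS0 (Real.exp_pos y)
      have h2 : S * Real.exp y ≤ Sf t :=
        le_trans (by nlinarith [Real.exp_pos y]) hSSf
      simp only [hf, hval _ h1 h2, hVtS, hVSval]
      ring
  have hsplit : (∫ y, f y ∂ν) = ∫ y in Set.Ioi (0:ℝ), f y ∂ν := by
    conv_lhs => rw [hfind]
    exact integral_indicator measurableSet_Ioi
  have hmono : (∫ y in Set.Ioi (0:ℝ), f y ∂ν)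
      ≤ ∫ y in Set.Ioi (0:ℝ), S * (Real.exp y - 1) ∂ν := by
    refine setIntegral_mono_on hnonlocint.integrableOn (hνint.const_mul S)
      measurableSet_Ioi ?_
    intro y hy
    have h := hup y (le_of_lt hy)
    simp only [hf, hVtS, hVSval]
    nlinarith
  have hconst : (∫ y in Set.Ioi (0:ℝ), S * (Real.exp y - 1) ∂ν)
      = S * ∫ y in Set.Ioi (0:ℝ), (Real.exp y - 1) ∂ν := MeasureTheory.integral_const_mul _ _
  have hbound : (∫ y, f y ∂ν) ≤ r * K := by
    rw [hsplit]
    refine le_trans hmono ?_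
    rw [hconst]
    have h1 : S * (∫ y in Set.Ioi (0:ℝ), (Real.exp y - 1) ∂ν) ≤ S * r :=
      mul_le_mul_of_nonneg_left hstruct hS0.le
    nlinarith [le_trans hSSf hSfK]
  rw [hVt0, hVSS0, hVSval, hVtS]
  have : (∫ y, (V t (S * Real.exp y) - V t S - S * (Real.exp y - 1) * VS t S) ∂ν)
      = ∫ y, f y ∂ν := rfl
  rw [this]
  nlinarith
end
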